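/- arXiv:2601.01004 — 9 statements merged into one kernel-verified Lean document; each statement's English description precedes it below -/
import Mathlib

section
/- If A ⊆ F^m has cardinality less than binomial(d+m, m), then there exists a nonzero polynomial F in m variables over F of total degree at most d vanishing on all of A. -/
/-- The number of monomial exponent vectors indexed by the sigma type of symmetric powers. -/
lemma aux_card_sigma (m d : ℕ) (hm : 1 ≤ m) :
    Fintype.card (Σ k : Fin (d + 1), Sym (Fin m) k) = (d + m).choose m := by
  rw [Fintype.card_sigma]
  have h1 : ∀ k : Fin (d + 1), Fintype.card (Sym (Fin m) k)
      = ((m - 1) + (k : ℕ)).choose (m - 1) := by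
    intro k
    rw [Sym.card_sym_fin_eq_multichoose, Nat.multichoose_eq]
    have h2 : m + (k : ℕ) - 1 = (m - 1) + (k : ℕ) := by omega
    rw [h2]
    have := Nat.choose_symm (n := (m - 1) + (k : ℕ)) (k := (k : ℕ)) (by omega)
    rw [Nat.add_sub_cancel] at this
    exact this.symm
  simp_rw [h1]
  rw [Fin.sum_univ_eq_sum_range (fun k => ((m - 1) + k).choose (m - 1))]
  have := Nat.sum_range_add_choose d (m - 1)
  simp_rw [add_comm (m - 1)] at this ⊢
  rw [this]
  congr 1 <;> omega

/-- If `A ⊆ F^m` has cardinality less than `(d+m).choose m`, then some nonzero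
polynomial in `m` variables of total degree at most `d` vanishes on all of `A`. -/
theorem stmt_2 {F : Type*} [Field F] (m : ℕ) (hm : 1 ≤ m) (d : ℕ)
    (A : Finset (Fin m → F)) (hA : A.card < (d + m).choose m) :
    ∃ P : MvPolynomial (Fin m) F, P ≠ 0 ∧ P.totalDegree ≤ d ∧
      ∀ a ∈ A, MvPolynomial.eval a P = 0 := by
  classical
  set V := MvPolynomial.restrictTotalDegree (Fin m) F d with hV
  -- index type for monomials of degree ≤ d
  set ι := (Σ k : Fin (d + 1), Sym (Fin m) k) with hι
  -- map sending an index to an exponent vector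
  set g : ι → (Fin m →₀ ℕ) := fun x => Multiset.toFinsupp (x.2 : Multiset (Fin m)) with hg
  have hginj : Function.Injective g := by
    rintro ⟨k, μ, hμ⟩ ⟨k', μ', hμ'⟩ h
    have hμμ' : μ = μ' := Multiset.toFinsupp.injective h
    subst hμμ'
    have : k = k' := by
      apply Fin.ext; rw [← hμ, ← hμ']
    subst this
    rfl
  have hgdeg : ∀ x : ι, ((g x).sum fun _ e => e) ≤ d := by
    rintro ⟨k, μ, hμ⟩
    have : ((Multiset.toFinsupp μ).sum fun _ => id) = Multiset.card μ :=
      Multiset.toFinsupp_sum_eq μ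
    show ((Multiset.toFinsupp μ).sum fun _ => id) ≤ d
    rw [this, hμ]
    omega
  -- the monomial family inside V
  have hmem : ∀ x : ι, (MvPolynomial.monomial (g x) (1 : F)) ∈ V := by
    intro x
    rw [hV, MvPolynomial.mem_restrictTotalDegree]
    refine le_trans (MvPolynomial.totalDegree_monomial_le _ _) (hgdeg x)
  set fam : ι → V := fun x => ⟨MvPolynomial.monomial (g x) (1 : F), hmem x⟩ with hfam
  have hli : LinearIndependent F fam := by
    have h1 : LinearIndependent F
        (fun s : (Fin m →₀ ℕ) => MvPolynomial.monomial s (1 : F)) := by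
      have := (MvPolynomial.basisMonomials (Fin m) F).linearIndependent
      simpa [MvPolynomial.coe_basisMonomials] using this
    have h2 : LinearIndependent F
        (fun x : ι => MvPolynomial.monomial (g x) (1 : F)) := h1.comp g hginj
    exact h2.of_comp V.subtype
  have hdim : (d + m).choose m ≤ Module.finrank F V := by
    have := hli.fintype_card_le_finrank
    rwa [aux_card_sigma m d hm] at this
  -- evaluation map
  set ev : V →ₗ[F] (A → F) := LinearMap.pi
    (fun a : A => ((MvPolynomial.aeval (a : Fin m → F)).toLinearMap).comp V.subtype) with hev
  have hninj : ¬ Function.Injective ev := by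
    intro hinj
    have h1 : Module.finrank F V ≤ Module.finrank F (A → F) :=
      LinearMap.finrank_le_finrank_of_injective hinj
    rw [Module.finrank_pi, Fintype.card_coe] at h1
    omega
  rw [injective_iff_map_eq_zero] at hninj
  push_neg at hninj
  obtain ⟨x, hx0, hxne⟩ := hninj
  refine ⟨(x : MvPolynomial (Fin m) F), ?_, ?_, ?_⟩
  · intro h
    exact hxne (Subtype.ext h)
  · exact (MvPolynomial.mem_restrictTotalDegree _ _ _).mp x.2
  · intro a ha
    have := congrFun hx0 ⟨a, ha⟩
    simpa [hev, MvPolynomial.aeval_def] using this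
end

section
/- If the footprint Δ_≺(I) of an ideal I with respect to a monomial ordering ≺ is finite, then the variety V_F(I) has at most |Δ_≺(I)| points. -/
/-!
Dividing by the nonzero elements of `I` (whose leading coefficients are units) shows that every
polynomial is congruent modulo `I` to an `F`-linear combination of footprint monomials. For a
finite set `S` of common zeros of `I`, evaluation at the points of `S` is onto `F^S` by
interpolation and kills `I`, so the values of the footprint monomials span `F^S` and
`|S| ≤ |Δ(I)|`. Taking `S` larger than `|Δ(I)|` inside an infinite variety is then impossible.
-/

open MvPolynomial

variable {F : Type*} [Field F] {m : ℕ}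

/-- `d` is the exponent of the leading monomial of `p` with respect to the
monomial ordering `mo`. -/
def IsLeadingMonomial (mo : MonomialOrder (Fin m)) (p : MvPolynomial (Fin m) F)
    (d : Fin m →₀ ℕ) : Prop :=
  d ∈ p.support ∧ ∀ e ∈ p.support, mo.toSyn e ≤ mo.toSyn d

/-- The footprint of an ideal `I` w.r.t. a monomial ordering: the set of (exponents of)
monomials which are divisible by no leading monomial of a nonzero element of `I`. -/
def footprint (mo : MonomialOrder (Fin m)) (I : Ideal (MvPolynomial (Fin m) F)) :
    Set (Fin m →₀ ℕ) :=
  {d | ∀ p ∈ I, p ≠ 0 → ∀ e, IsLeadingMonomial mo p e → ¬ e ≤ d}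

theorem isLeadingMonomial_iff {mo : MonomialOrder (Fin m)} {p : MvPolynomial (Fin m) F}
    {d : Fin m →₀ ℕ} : IsLeadingMonomial mo p d ↔ p ≠ 0 ∧ mo.degree p = d := by
  constructor
  · rintro ⟨hd, hmax⟩
    have hp : p ≠ 0 := ne_zero_iff.2 ⟨d, mem_support_iff.1 hd⟩
    exact ⟨hp, mo.toSyn.injective <|
      le_antisymm (hmax _ (mo.degree_mem_support hp)) (mo.le_degree hd)⟩
  · rintro ⟨hp, rfl⟩
    exact ⟨mo.degree_mem_support hp, fun e he => mo.le_degree he⟩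

theorem mem_footprint_iff {mo : MonomialOrder (Fin m)} {I : Ideal (MvPolynomial (Fin m) F)}
    {d : Fin m →₀ ℕ} :
    d ∈ footprint mo I ↔ ∀ p ∈ I, p ≠ 0 → ¬ mo.degree p ≤ d := by
  simp only [footprint, isLeadingMonomial_iff]
  grind

theorem exists_sub_mem_support_subset_footprint (mo : MonomialOrder (Fin m))
    (I : Ideal (MvPolynomial (Fin m) F)) (f : MvPolynomial (Fin m) F) :
    ∃ r, f - r ∈ I ∧ ∀ d ∈ r.support, d ∈ footprint mo I := by
  obtain ⟨g, r, rfl, -, hr⟩ := mo.div_set (B := {p | p ∈ I ∧ p ≠ 0})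
    (fun b hb => mo.isUnit_leadingCoeff.2 hb.2) f
  refine ⟨r, ?_, fun d hd => mem_footprint_iff.2 fun p hp hp0 => hr d hd p ⟨hp, hp0⟩⟩
  rw [add_sub_cancel_right]
  refine Submodule.span_le.2 ?_ (Finsupp.mem_span_range_iff_exists_finsupp.2 ⟨g, rfl⟩)
  rintro _ ⟨b, rfl⟩
  exact b.2.1

section Interpolation

variable {σ : Type*}

theorem exists_eval_eq_one_forall_eval_eq_zero {x : σ → F} {T : Finset (σ → F)}
    (hx : x ∉ T) : ∃ p : MvPolynomial σ F, eval x p = 1 ∧ ∀ y ∈ T, eval y p = 0 := by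
  classical
  induction T using Finset.induction_on with
  | empty => exact ⟨1, by simp, by simp⟩
  | insert y T _ ih =>
    obtain ⟨p, hpx, hpT⟩ := ih fun h => hx (Finset.mem_insert_of_mem h)
    obtain ⟨i, hi⟩ := Function.ne_iff.1 fun h : x = y => hx (h ▸ Finset.mem_insert_self _ _)
    refine ⟨p * C (x i - y i)⁻¹ * (X i - C (y i)), by simp [hpx, sub_ne_zero.2 hi], ?_⟩
    intro z hz
    rcases Finset.mem_insert.1 hz with rfl | hz
    · simp
    · simp [hpT z hz]

noncomputable def evalOnPoints (S : Finset (σ → F)) : MvPolynomial σ F →ₗ[F] (S → F) :=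
  LinearMap.pi fun x => (aeval x.1).toLinearMap

@[simp]
theorem evalOnPoints_apply (S : Finset (σ → F)) (p : MvPolynomial σ F) (x : S) :
    evalOnPoints S p x = eval x.1 p :=
  rfl

theorem evalOnPoints_surjective (S : Finset (σ → F)) :
    Function.Surjective (evalOnPoints S) := by
  classical
  rw [← LinearMap.range_eq_top, eq_top_iff, ← (Pi.basisFun F S).span_eq, Submodule.span_le]
  rintro _ ⟨x, rfl⟩
  obtain ⟨p, hpx, hp⟩ := exists_eval_eq_one_forall_eval_eq_zero (Finset.notMem_erase x.1 S)
  refine ⟨p, funext fun y => ?_⟩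
  rcases eq_or_ne y x with rfl | hyx
  · simp [hpx]
  · simp [hyx, hp y.1 (Finset.mem_erase.2 ⟨Subtype.coe_ne_coe.2 hyx, y.2⟩)]

end Interpolation

theorem card_le_ncard_footprint (mo : MonomialOrder (Fin m))
    (I : Ideal (MvPolynomial (Fin m) F)) (hfin : (footprint mo I).Finite)
    (S : Finset (Fin m → F)) (hS : ∀ x ∈ S, ∀ p ∈ I, eval x p = 0) :
    S.card ≤ (footprint mo I).ncard := by
  let b : hfin.toFinset → (S → F) := fun d => evalOnPoints S (monomial d.1 1)
  have hrange : LinearMap.range (evalOnPoints S) ≤ Submodule.span F (Set.range b) := by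
    rintro _ ⟨f, rfl⟩
    obtain ⟨r, hfr, hr⟩ := exists_sub_mem_support_subset_footprint mo I f
    have hfr_eval : evalOnPoints S f = evalOnPoints S r := by
      rw [← sub_eq_zero, ← map_sub]
      exact funext fun x => hS x.1 x.2 _ hfr
    rw [hfr_eval, r.as_sum, map_sum]
    refine Submodule.sum_mem _ fun d hd => ?_
    rw [← mul_one (coeff d r), ← smul_eq_mul, ← smul_monomial, map_smul]
    exact Submodule.smul_mem _ _
      (Submodule.subset_span ⟨⟨d, hfin.mem_toFinset.2 (hr d hd)⟩, rfl⟩)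
  calc S.card = Module.finrank F (S → F) := by simp
    _ = Module.finrank F (LinearMap.range (evalOnPoints S)) := by
      rw [LinearMap.range_eq_top.2 (evalOnPoints_surjective S), finrank_top]
    _ ≤ (Set.range b).finrank F := Submodule.finrank_mono hrange
    _ ≤ Fintype.card hfin.toFinset := finrank_range_le_card b
    _ = (footprint mo I).ncard := by rw [Fintype.card_coe, Set.ncard_eq_toFinset_card _ hfin]

/-- The footprint bound: if the footprint of `I` is finite, then the affine variety of `I`
has at most `|Δ_≺(I)|` points. -/
theorem stmt_4 (mo : MonomialOrder (Fin m)) (I : Ideal (MvPolynomial (Fin m) F))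
    (hfin : (footprint mo I).Finite) :
    {x : Fin m → F | ∀ p ∈ I, eval x p = 0}.Finite ∧
    {x : Fin m → F | ∀ p ∈ I, eval x p = 0}.ncard ≤ (footprint mo I).ncard := by
  set V := {x : Fin m → F | ∀ p ∈ I, eval x p = 0}
  have hV : V.Finite := by
    by_contra hinf
    obtain ⟨S, hSV, hcard⟩ :=
      Set.Infinite.exists_subset_card_eq hinf ((footprint mo I).ncard + 1)
    have := card_le_ncard_footprint mo I hfin S fun x hx => hSV hx
    omega
  refine ⟨hV, ?_⟩
  rw [Set.ncard_eq_toFinset_card _ hV]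
  exact card_le_ncard_footprint mo I hfin hV.toFinset fun x hx => hV.mem_toFinset.1 hx
end

section
/- For the ideal generated by the univariate vanishing polynomials of finite sets A_1,…,A_m, the footprint equals the box of monomials with deg_{X_i} < |A_i| for each i, independently of the monomial ordering. -/
open MvPolynomial

variable {F : Type*} [Field F] {m : ℕ}

section Aux

open scoped Pointwise

lemma prod_X_sub_C_struct (i : Fin m) (s : Finset F) :
    MvPolynomial.coeff (Finsupp.single i s.card)
        (∏ b ∈ s, (X i - C b : MvPolynomial (Fin m) F)) = 1 ∧
      ∀ e ∈ (∏ b ∈ s, (X i - C b : MvPolynomial (Fin m) F)).support,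
        e ≤ Finsupp.single i s.card := by
  classical
  induction s using Finset.induction_on with
  | empty =>
      constructor
      · simp
      · intro e he
        rw [Finset.prod_empty, MvPolynomial.mem_support_iff, MvPolynomial.coeff_one] at he
        by_cases h : (0 : Fin m →₀ ℕ) = e
        · simp [← h]
        · simp [h] at he
  | @insert a s ha ih =>
      obtain ⟨ih1, ih2⟩ := ih
      rw [Finset.prod_insert ha, Finset.card_insert_of_notMem ha]
      set P := ∏ b ∈ s, (X i - C b : MvPolynomial (Fin m) F) with hP
      have hsingle : Finsupp.single i (s.card + 1)
          = Finsupp.single i 1 + Finsupp.single i s.card := by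
        rw [← Finsupp.single_add, add_comm]
      have hXsupp : ∀ u ∈ (X i - C a : MvPolynomial (Fin m) F).support,
          u ≤ Finsupp.single i 1 := by
        intro u hu
        rw [MvPolynomial.mem_support_iff, MvPolynomial.coeff_sub, MvPolynomial.coeff_X',
          MvPolynomial.coeff_C] at hu
        by_cases h1 : Finsupp.single i 1 = u
        · exact le_of_eq h1.symm
        · by_cases h2 : (0 : Fin m →₀ ℕ) = u
          · rw [← h2]; exact zero_le
          · simp [h1, h2] at hu
      constructor
      · have hnot : MvPolynomial.coeff (Finsupp.single i (s.card + 1)) P = 0 := by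
          by_contra h
          have := ih2 _ (MvPolynomial.mem_support_iff.mpr h)
          have := (Finsupp.le_def.mp this) i
          simp at this
        rw [sub_mul, MvPolynomial.coeff_sub, MvPolynomial.coeff_C_mul, hsingle,
          MvPolynomial.coeff_X_mul, ih1]
        rw [← hsingle, hnot, mul_zero, sub_zero]
      · intro e he
        have hsub : ((X i - C a) * P).support ⊆
            (X i - C a : MvPolynomial (Fin m) F).support + P.support :=
          MvPolynomial.support_mul _ _
        obtain ⟨u, hu, v, hv, rfl⟩ := Finset.mem_add.mp (hsub he)
        rw [hsingle]
        exact add_le_add (hXsupp u hu) (ih2 v hv)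

lemma box_eval_zero : ∀ {k : ℕ} (A : Fin k → Finset F) (r : MvPolynomial (Fin k) F),
    (∀ i, r.degreeOf i < (A i).card) →
    (∀ x : Fin k → F, (∀ i, x i ∈ A i) → eval x r = 0) → r = 0 := by
  intro k
  induction k with
  | zero =>
      intro A r _ h
      have h0 := h Fin.elim0 (fun i => i.elim0)
      rw [eq_C_of_isEmpty r, eval_C] at h0
      rw [eq_C_of_isEmpty r, h0, map_zero]
  | succ k ih =>
      intro A r hdeg h
      set q := finSuccEquiv F k r with hq
      have key : ∀ xs : Fin k → F, (∀ i, xs i ∈ A i.succ) →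
          q.map (eval xs) = 0 := by
        intro xs hxs
        apply Polynomial.eq_zero_of_natDegree_lt_card_of_eval_eq_zero' _ (A 0)
        · intro y hy
          rw [← eval_eq_eval_mv_eval']
          apply h
          intro i
          refine Fin.cases ?_ ?_ i
          · simpa using hy
          · exact hxs
        · calc (q.map (eval xs)).natDegree ≤ q.natDegree :=
                Polynomial.natDegree_map_le
            _ = degreeOf 0 r := natDegree_finSuccEquiv r
            _ < (A 0).card := hdeg 0
      have hcoeff : ∀ j : ℕ, q.coeff j = 0 := by
        intro j
        apply ih (fun i => A i.succ)
        · intro i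
          exact lt_of_le_of_lt (degreeOf_coeff_finSuccEquiv r i j) (hdeg i.succ)
        · intro xs hxs
          have hk := key xs hxs
          have : (q.map (eval xs)).coeff j = 0 := by rw [hk]; simp
          rwa [Polynomial.coeff_map] at this
      have hq0 : q = 0 := Polynomial.ext fun j => by rw [hcoeff j, Polynomial.coeff_zero]
      have : finSuccEquiv F k r = finSuccEquiv F k 0 := by rw [← hq, hq0, map_zero]
      exact (finSuccEquiv F k).injective this

lemma eval_zero_of_mem_span {m : ℕ} (A : Fin m → Finset F) (x : Fin m → F)
    (hx : ∀ i, x i ∈ A i) {p : MvPolynomial (Fin m) F}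
    (hp : p ∈ Ideal.span
      (Set.range fun i : Fin m => ∏ b ∈ A i, (X i - C b : MvPolynomial (Fin m) F))) :
    eval x p = 0 := by
  have hle : Ideal.span
      (Set.range fun i : Fin m => ∏ b ∈ A i, (X i - C b : MvPolynomial (Fin m) F))
      ≤ RingHom.ker (eval x) := by
    rw [Ideal.span_le]
    rintro _ ⟨i, rfl⟩
    rw [SetLike.mem_coe, RingHom.mem_ker, map_prod]
    apply Finset.prod_eq_zero (hx i)
    simp
  exact hle hp

lemma reduce (mo : MonomialOrder (Fin m)) (A : Fin m → Finset F)
    (hA : ∀ i, (A i).Nonempty) (p : MvPolynomial (Fin m) F) :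
    ∃ r : MvPolynomial (Fin m) F,
      p - r ∈ Ideal.span
          (Set.range fun i : Fin m => ∏ b ∈ A i, (X i - C b : MvPolynomial (Fin m) F)) ∧
      (∀ c ∈ r.support, ∀ i, c i < (A i).card) ∧
      (∀ c₀ : Fin m →₀ ℕ,
        (∀ b ∈ p.support, (∃ i, (A i).card ≤ b i) → mo.toSyn b < mo.toSyn c₀) →
        r.coeff c₀ = p.coeff c₀) := by
  classical
  set I := Ideal.span
      (Set.range fun i : Fin m => ∏ b ∈ A i, (X i - C b : MvPolynomial (Fin m) F)) with hI
  suffices H : ∀ B : mo.syn, ∀ p : MvPolynomial (Fin m) F,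
      (p.support.filter fun c => ∃ i, (A i).card ≤ c i).sup mo.toSyn ≤ B →
      ∃ r : MvPolynomial (Fin m) F,
        p - r ∈ I ∧
        (∀ c ∈ r.support, ∀ i, c i < (A i).card) ∧
        (∀ c₀ : Fin m →₀ ℕ,
          (∀ b ∈ p.support, (∃ i, (A i).card ≤ b i) → mo.toSyn b < mo.toSyn c₀) →
          r.coeff c₀ = p.coeff c₀) by
    exact H _ p le_rfl
  intro B
  induction B using WellFoundedLT.induction with
  | _ B IH =>
  intro p hp
  by_cases hbad : (p.support.filter fun c => ∃ i, (A i).card ≤ c i).Nonempty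
  · obtain ⟨c, hc_mem, hc_sup⟩ := Finset.exists_mem_eq_sup _ hbad mo.toSyn
    rw [Finset.mem_filter] at hc_mem
    obtain ⟨hcp, i, hi⟩ := hc_mem
    have hsingle : Finsupp.single i (A i).card ≤ c := Finsupp.single_le_iff.mpr hi
    set u := c - Finsupp.single i (A i).card with hu
    have huc : u + Finsupp.single i (A i).card = c := tsub_add_cancel_of_le hsingle
    set G := ∏ b ∈ A i, (X i - C b : MvPolynomial (Fin m) F) with hG
    obtain ⟨hG1, hG2⟩ := prod_X_sub_C_struct i (A i)
    set s := monomial u (p.coeff c) * G with hs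
    have hs_coeff : s.coeff c = p.coeff c := by
      rw [hs, ← huc, coeff_monomial_mul, hG, hG1, mul_one]
    have hs_supp : ∀ b ∈ s.support, mo.toSyn b ≤ mo.toSyn c := by
      intro b hb
      have hsub := MvPolynomial.support_mul (monomial u (p.coeff c)) G hb
      obtain ⟨b1, hb1, b2, hb2, rfl⟩ := Finset.mem_add.mp hsub
      have hb1' : b1 = u := Finset.mem_singleton.mp (support_monomial_subset hb1)
      apply mo.toSyn_monotone
      rw [hb1', ← huc]
      exact add_le_add le_rfl (hG2 _ hb2)
    set q := p - s with hq
    have hq_coeff_c : q.coeff c = 0 := by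
      rw [hq, coeff_sub, hs_coeff, sub_self]
    have hq_bad : ∀ b ∈ q.support.filter fun c => ∃ i, (A i).card ≤ c i,
        mo.toSyn b < mo.toSyn c := by
      intro b hb
      rw [Finset.mem_filter] at hb
      have hbc : b ≠ c := by
        rintro rfl
        exact (MvPolynomial.mem_support_iff.mp hb.1) hq_coeff_c
      have hbsub : b ∈ p.support ∪ s.support := by
        have : q.support ⊆ p.support ∪ s.support := by
          rw [hq, sub_eq_add_neg]
          exact (MvPolynomial.support_add).trans (by rw [MvPolynomial.support_neg])
        exact this hb.1
      have hble : mo.toSyn b ≤ mo.toSyn c := by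
        rcases Finset.mem_union.mp hbsub with h | h
        · rw [← hc_sup]
          exact Finset.le_sup (Finset.mem_filter.mpr ⟨h, hb.2⟩)
        · exact hs_supp b h
      exact lt_of_le_of_ne hble (fun he => hbc (mo.toSyn.injective he))
    have hc_pos : (0 : mo.syn) < mo.toSyn c := by
      have hcne : c ≠ 0 := by
        intro h
        rw [h] at hi
        simp only [Finsupp.coe_zero, Pi.zero_apply, Nat.le_zero] at hi
        exact (Finset.card_pos.mpr (hA i)).ne' hi
      have : (0 : Fin m →₀ ℕ) < c := lt_of_le_of_ne zero_le (Ne.symm hcne)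
      have := mo.toSyn_strictMono this
      rwa [map_zero] at this
    have hq_sup_lt :
        (q.support.filter fun c => ∃ i, (A i).card ≤ c i).sup mo.toSyn < mo.toSyn c := by
      rw [Finset.sup_lt_iff (by rw [MonomialOrder.bot_eq_zero]; exact hc_pos)]
      exact hq_bad
    have hcB : mo.toSyn c ≤ B := hc_sup ▸ hp
    obtain ⟨r, hr1, hr2, hr3⟩ := IH _ (lt_of_lt_of_le hq_sup_lt hcB) q le_rfl
    refine ⟨r, ?_, hr2, ?_⟩
    · have hsI : s ∈ I := Ideal.mul_mem_left _ _ (Ideal.subset_span ⟨i, rfl⟩)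
      have hpr : p - r = s + (q - r) := by rw [hq]; ring
      rw [hpr]
      exact Ideal.add_mem _ hsI hr1
    · intro c₀ hc₀
      have hcc₀ : mo.toSyn c < mo.toSyn c₀ := hc₀ c hcp ⟨i, hi⟩
      have h1 : r.coeff c₀ = q.coeff c₀ := by
        apply hr3
        intro b hb hbbad
        exact lt_trans (hq_bad b (Finset.mem_filter.mpr ⟨hb, hbbad⟩)) hcc₀
      have h2 : s.coeff c₀ = 0 := by
        by_contra h
        exact absurd hcc₀ (not_lt.mpr (hs_supp c₀ (MvPolynomial.mem_support_iff.mpr h)))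
      rw [h1, hq, coeff_sub, h2, sub_zero]
  · refine ⟨p, by rw [sub_self]; exact Ideal.zero_mem _, ?_, fun _ _ => rfl⟩
    intro c hc i
    by_contra h
    exact hbad ⟨c, Finset.mem_filter.mpr ⟨hc, i, not_lt.mp h⟩⟩

end Aux

/-- For the ideal generated by the vanishing polynomials `G_i = ∏_{b ∈ A_i}(X_i - b)` of
finite nonempty sets `A_1,…,A_m`, the footprint equals the box of monomials with
`deg_{X_i} < |A_i|`, independently of the monomial ordering. -/
theorem stmt_6 (mo : MonomialOrder (Fin m)) (A : Fin m → Finset F)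
    (hA : ∀ i, (A i).Nonempty) :
    footprint mo (Ideal.span
        (Set.range fun i : Fin m => ∏ b ∈ A i, (X i - C b : MvPolynomial (Fin m) F)))
      = {d : Fin m →₀ ℕ | ∀ i, d i < (A i).card} := by
  classical
  ext d
  simp only [footprint, Set.mem_setOf_eq]
  constructor
  · intro hd
    by_contra hbox
    push_neg at hbox
    obtain ⟨i, hi⟩ := hbox
    obtain ⟨hG1, hG2⟩ := prod_X_sub_C_struct i (A i)
    set G := ∏ b ∈ A i, (X i - C b : MvPolynomial (Fin m) F) with hG
    have hGI : G ∈ Ideal.span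
        (Set.range fun i : Fin m => ∏ b ∈ A i, (X i - C b : MvPolynomial (Fin m) F)) :=
      Ideal.subset_span ⟨i, rfl⟩
    have hGne : G ≠ 0 := by
      intro h
      rw [h, coeff_zero] at hG1
      exact one_ne_zero hG1.symm
    have hlead : IsLeadingMonomial mo G (Finsupp.single i (A i).card) := by
      constructor
      · rw [MvPolynomial.mem_support_iff, hG1]; exact one_ne_zero
      · intro e he
        exact mo.toSyn_monotone (hG2 e he)
    exact hd G hGI hGne _ hlead (Finsupp.single_le_iff.mpr hi)
  · intro hbox p hpI hp e he hed
    have he_box : ∀ i, e i < (A i).card :=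
      fun i => lt_of_le_of_lt (Finsupp.le_def.mp hed i) (hbox i)
    obtain ⟨r, hr1, hr2, hr3⟩ := reduce mo A hA p
    have hre : r.coeff e = p.coeff e := by
      apply hr3
      intro b hb hbbad
      have hble := he.2 b hb
      have hbe : b ≠ e := by
        rintro rfl
        obtain ⟨i, hi⟩ := hbbad
        exact absurd (he_box i) (not_lt.mpr hi)
      exact lt_of_le_of_ne hble (fun hsyn => hbe (mo.toSyn.injective hsyn))
    have hrI : r ∈ Ideal.span
        (Set.range fun i : Fin m => ∏ b ∈ A i, (X i - C b : MvPolynomial (Fin m) F)) := by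
      have : r = p - (p - r) := by ring
      rw [this]
      exact Ideal.sub_mem _ hpI hr1
    have hr0 : r = 0 := by
      apply box_eval_zero A r
      · intro i
        rw [MvPolynomial.degreeOf_lt_iff (Finset.card_pos.mpr (hA i))]
        exact fun c hc => hr2 c hc i
      · intro x hx
        exact eval_zero_of_mem_span A x hx hrI
    rw [hr0, coeff_zero] at hre
    exact (MvPolynomial.mem_support_iff.mp he.1) hre.symm
end

section
/- A nonzero polynomial F ∈ F[X_1,…,X_m] whose leading monomial (with respect to some monomial ordering) is X_1^{e_1}⋯X_m^{e_m} with e_i < |A_i| has at most |A_1|⋯|A_m| − (|A_1|−e_1)⋯(|A_m|−e_m) roots in the Cartesian product A_1 × ⋯ × A_m. -/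
open scoped Classical

open MvPolynomial

variable {F : Type*} [Field F] {m : ℕ}

/-- Key reduction lemma: every polynomial is a sum of an element in the span of
"standard" monomials and an element of the ideal generated by `H`. -/
lemma aux_reduction (mo : MonomialOrder (Fin m))
    (Bset : Set (Fin m →₀ ℕ)) (H : Set (MvPolynomial (Fin m) F))
    (hred : ∀ a : Fin m →₀ ℕ, a ∉ Bset → ∃ h ∈ H, ∃ t : Fin m →₀ ℕ, ∃ lc : F,
      ∃ r : MvPolynomial (Fin m) F, lc ≠ 0 ∧ t ≤ a ∧
        h = monomial t lc + r ∧ ∀ b ∈ r.support, mo.toSyn b < mo.toSyn t)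
    (P : MvPolynomial (Fin m) F) :
    P ∈ (Submodule.span F ((fun a => (monomial a (1:F) : MvPolynomial (Fin m) F)) '' Bset)) ⊔
      (Ideal.span H).restrictScalars F := by
  set T := (Submodule.span F ((fun a => (monomial a (1:F) : MvPolynomial (Fin m) F)) '' Bset)) ⊔
      (Ideal.span H).restrictScalars F with hT
  suffices Hd : ∀ d : mo.syn, ∀ P : MvPolynomial (Fin m) F,
      P.support.sup mo.toSyn ≤ d → P ∈ T from Hd _ P le_rfl
  intro d
  induction d using WellFoundedLT.induction with
  | _ d IH =>
    intro P hP
    rw [← P.support_sum_monomial_coeff]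
    refine Submodule.sum_mem _ fun a ha => ?_
    by_cases hB : a ∈ Bset
    · have h1 : (monomial a (P.coeff a) : MvPolynomial (Fin m) F)
          = (P.coeff a) • monomial a (1:F) := by
        rw [smul_monomial, smul_eq_mul, mul_one]
      rw [h1]
      exact Submodule.mem_sup_left
        (Submodule.smul_mem _ _ (Submodule.subset_span ⟨a, hB, rfl⟩))
    · obtain ⟨h, hH, t, lc, r, hlc, hta, hhr, hr⟩ := hred a hB
      set c := P.coeff a with hcdef
      set Q := (c / lc) • (monomial (a - t) (1:F) * r) with hQdef
      have key : (monomial a c : MvPolynomial (Fin m) F)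
          = (c / lc) • (monomial (a - t) (1:F) * h) - Q := by
        rw [hhr, mul_add, smul_add, hQdef, add_sub_cancel_right, monomial_mul,
          tsub_add_cancel_of_le hta, one_mul, smul_monomial, smul_eq_mul,
          div_mul_cancel₀ _ hlc]
      rw [key]
      have hfirst : (c / lc) • (monomial (a - t) (1:F) * h) ∈ T := by
        refine Submodule.mem_sup_right (Submodule.smul_mem _ _ ?_)
        simpa using Ideal.mul_mem_left _ _ (Ideal.subset_span hH)
      refine sub_mem hfirst ?_
      by_cases hQ0 : Q = 0
      · rw [hQ0]; exact zero_mem _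
      · -- every monomial of Q is strictly smaller than a
        have hQsupp : ∀ b ∈ Q.support, mo.toSyn b < mo.toSyn a := by
          intro b hb
          have hb1 : b ∈ (monomial (a - t) (1:F) * r).support :=
            MvPolynomial.support_smul hb
          have hb2 := MvPolynomial.support_mul _ _ hb1
          rw [Finset.mem_add] at hb2
          obtain ⟨u, hu, v, hv, rfl⟩ := hb2
          have hu' : u = a - t := by
            have := MvPolynomial.support_monomial (s := a - t) (a := (1:F)) ▸ hu
            simpa [one_ne_zero] using this
          subst hu'
          have : mo.toSyn ((a - t) + v) < mo.toSyn ((a - t) + t) := by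
            rw [map_add, map_add]
            exact add_lt_add_right (hr v hv) _
          rwa [tsub_add_cancel_of_le hta] at this
        have hbot : (⊥ : mo.syn) < mo.toSyn a := by
          obtain ⟨b, hb⟩ := (MvPolynomial.ne_zero_iff.mp hQ0)
          have hb' : b ∈ Q.support := MvPolynomial.mem_support_iff.mpr hb
          exact lt_of_le_of_lt bot_le (hQsupp b hb')
        have hlt : Q.support.sup mo.toSyn < d := by
          have h1 : Q.support.sup mo.toSyn < mo.toSyn a :=
            (Finset.sup_lt_iff hbot).mpr hQsupp
          have h2 : mo.toSyn a ≤ d := le_trans (Finset.le_sup ha) hP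
          exact lt_of_lt_of_le h1 h2
        exact IH _ hlt Q le_rfl

/-- Structure of `∏ a ∈ s, (X i - C a)` : leading monomial plus lower terms. -/
lemma aux_g (i : Fin m) (s : Finset F) :
    ∃ r : MvPolynomial (Fin m) F,
      (∏ a ∈ s, (X i - C a : MvPolynomial (Fin m) F))
        = monomial (Finsupp.single i s.card) 1 + r ∧
      ∀ b ∈ r.support, ∃ k < s.card, b = Finsupp.single i k := by
  classical
  set q : Polynomial F := ∏ a ∈ s, (Polynomial.X - Polynomial.C a) with hq
  have hmonic : q.Monic :=
    Polynomial.monic_prod_of_monic _ _ fun a _ => Polynomial.monic_X_sub_C a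
  have hdeg : q.natDegree = s.card := by
    rw [hq, Polynomial.natDegree_prod_of_monic _ _ fun a _ => Polynomial.monic_X_sub_C a]
    simp [Polynomial.natDegree_X_sub_C]
  have hrepr : (∏ a ∈ s, (X i - C a : MvPolynomial (Fin m) F))
      = Polynomial.aeval (X i : MvPolynomial (Fin m) F) q := by
    rw [hq, map_prod]
    refine Finset.prod_congr rfl fun a _ => ?_
    simp [MvPolynomial.algebraMap_eq]
  rw [hrepr, Polynomial.aeval_eq_sum_range, hdeg, Finset.sum_range_succ]
  have htop : q.coeff s.card • (X i : MvPolynomial (Fin m) F) ^ s.card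
      = monomial (Finsupp.single i s.card) 1 := by
    rw [← hdeg, hmonic.coeff_natDegree, one_smul, hdeg, X_pow_eq_monomial]
  refine ⟨∑ k ∈ Finset.range s.card, q.coeff k • (X i : MvPolynomial (Fin m) F) ^ k,
    by rw [htop, add_comm], ?_⟩
  intro b hb
  have := MvPolynomial.support_sum hb
  rw [Finset.mem_biUnion] at this
  obtain ⟨k, hk, hbk⟩ := this
  refine ⟨k, Finset.mem_range.mp hk, ?_⟩
  have : b ∈ ((monomial (Finsupp.single i k)) (q.coeff k)).support := by
    rwa [X_pow_eq_monomial, smul_monomial, smul_eq_mul, mul_one] at hbk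
  rw [MvPolynomial.support_monomial] at this
  by_cases h0 : q.coeff k = 0
  · simp [h0] at this
  · simp [h0] at this
    exact this

lemma aux_count (c e : Fin m → ℕ) :
    ((Fintype.piFinset fun i => Finset.range (c i)).filter
        (fun a => ¬ ∀ i, e i ≤ a i)).card = ∏ i, c i - ∏ i, (c i - e i) := by
  classical
  have h2 : ((Fintype.piFinset fun i => Finset.range (c i)).filter
      (fun a => ∀ i, e i ≤ a i)).card = ∏ i, (c i - e i) := by
    have hEq : (Fintype.piFinset fun i => Finset.range (c i)).filter (fun a => ∀ i, e i ≤ a i)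
        = Fintype.piFinset fun i => Finset.Ico (e i) (c i) := by
      ext a
      simp only [Finset.mem_filter, Fintype.mem_piFinset, Finset.mem_range, Finset.mem_Ico]
      constructor
      · rintro ⟨h1, h2⟩ i; exact ⟨h2 i, h1 i⟩
      · intro h; exact ⟨fun i => (h i).2, fun i => (h i).1⟩
    rw [hEq, Fintype.card_piFinset]
    simp [Nat.card_Ico]
  have h3 : ((Fintype.piFinset fun i => Finset.range (c i)).filter
        (fun a => ∀ i, e i ≤ a i)).card +
      ((Fintype.piFinset fun i => Finset.range (c i)).filter
        (fun a => ¬ ∀ i, e i ≤ a i)).card = ∏ i, c i := by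
    rw [Finset.card_filter_add_card_filter_not, Fintype.card_piFinset]
    simp
  rw [← h2, ← h3, Nat.add_sub_cancel_left]

/-- The footprint bound for Cartesian products: a nonzero polynomial with leading
monomial `X_1^{e_1}⋯X_m^{e_m}`, `e_i < |A_i|`, has at most
`|A_1|⋯|A_m| − (|A_1|−e_1)⋯(|A_m|−e_m)` roots in `A_1 × ⋯ × A_m`. -/
theorem stmt_7 (mo : MonomialOrder (Fin m)) (A : Fin m → Finset F)
    (p : MvPolynomial (Fin m) F) (hp : p ≠ 0) (e : Fin m →₀ ℕ)
    (hlm : IsLeadingMonomial mo p e) (he : ∀ i, e i < (A i).card) :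
    ((Fintype.piFinset A).filter (fun x => eval x p = 0)).card ≤
      ∏ i, (A i).card - ∏ i, ((A i).card - e i) := by
  classical
  set c : Fin m → ℕ := fun i => (A i).card with hc
  set Zf := (Fintype.piFinset A).filter (fun x => eval x p = 0) with hZf
  set g : Fin m → MvPolynomial (Fin m) F := fun i => ∏ a ∈ A i, (X i - C a) with hgdef
  set H : Set (MvPolynomial (Fin m) F) := insert p (Set.range g) with hHdef
  set StdFf : Finset (Fin m → ℕ) :=
    (Fintype.piFinset fun i => Finset.range (c i)).filter (fun a => ¬ ∀ i, e i ≤ a i)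
    with hStdFf
  set StdFs : Finset (Fin m →₀ ℕ) := StdFf.image (Finsupp.equivFunOnFinite.symm) with hStdFs
  have hmemStd : ∀ a : Fin m →₀ ℕ,
      a ∈ StdFs ↔ ((∀ i, a i < c i) ∧ ¬ ∀ i, e i ≤ a i) := by
    intro a
    rw [hStdFs, Finset.mem_image]
    constructor
    · rintro ⟨x, hx, rfl⟩
      rw [hStdFf, Finset.mem_filter, Fintype.mem_piFinset] at hx
      simpa using hx
    · intro h
      refine ⟨Finsupp.equivFunOnFinite a, ?_, by simp⟩
      rw [hStdFf, Finset.mem_filter, Fintype.mem_piFinset]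
      simpa using h
  -- reduction hypothesis
  have hred : ∀ a : Fin m →₀ ℕ, a ∉ (↑StdFs : Set (Fin m →₀ ℕ)) → ∃ h ∈ H,
      ∃ t : Fin m →₀ ℕ, ∃ lc : F, ∃ r : MvPolynomial (Fin m) F, lc ≠ 0 ∧ t ≤ a ∧
        h = monomial t lc + r ∧ ∀ b ∈ r.support, mo.toSyn b < mo.toSyn t := by
    intro a ha
    rw [Finset.mem_coe, hmemStd] at ha
    push_neg at ha
    by_cases hcase : ∀ i, a i < c i
    · have hea : ∀ i, e i ≤ a i := ha hcase
      refine ⟨p, Set.mem_insert _ _, e, p.coeff e, p - monomial e (p.coeff e),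
        MvPolynomial.mem_support_iff.mp hlm.1, Finsupp.le_def.mpr hea, by ring, ?_⟩
      intro b hb
      rw [MvPolynomial.mem_support_iff] at hb
      by_cases hbe : b = e
      · subst hbe; simp [MvPolynomial.coeff_monomial] at hb
      · have hbp : b ∈ p.support := by
          rw [MvPolynomial.mem_support_iff]
          intro h0
          apply hb
          simp [MvPolynomial.coeff_sub, MvPolynomial.coeff_monomial, h0, Ne.symm hbe]
        exact lt_of_le_of_ne (hlm.2 b hbp) (fun hEq => hbe (mo.toSyn.injective hEq))
    · push_neg at hcase
      obtain ⟨i, hi⟩ := hcase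
      obtain ⟨r, hgr, hrsupp⟩ := aux_g (F := F) i (A i)
      refine ⟨g i, Set.mem_insert_iff.mpr (Or.inr ⟨i, rfl⟩), Finsupp.single i (c i), 1, r,
        one_ne_zero, Finsupp.single_le_iff.mpr hi, hgr, ?_⟩
      intro b hb
      obtain ⟨k, hk, rfl⟩ := hrsupp b hb
      have hle : (Finsupp.single i k) ≤ Finsupp.single i (c i) :=
        Finsupp.single_le_single.mpr hk.le
      have hne : (Finsupp.single i k) ≠ Finsupp.single i (c i) :=
        fun hEq => (Nat.ne_of_lt hk) (Finsupp.single_injective i hEq)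
      exact lt_of_le_of_ne (mo.toSyn_monotone hle) (fun hEq => hne (mo.toSyn.injective hEq))
  have hmem := aux_reduction mo (↑StdFs) H hred
  -- the ideal vanishes on the zero set
  have hvanish : ∀ q ∈ Ideal.span H, ∀ z : {x // x ∈ Zf}, eval (z : Fin m → F) q = 0 := by
    intro q hq z
    have hker : Ideal.span H ≤ RingHom.ker (Pi.ringHom fun z : {x // x ∈ Zf} =>
        (eval (z : Fin m → F) : MvPolynomial (Fin m) F →+* F)) := by
      rw [Ideal.span_le]
      intro h hh
      rw [hHdef, Set.mem_insert_iff] at hh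
      rw [SetLike.mem_coe, RingHom.mem_ker]
      rcases hh with rfl | ⟨i, rfl⟩
      · funext w
        have := (Finset.mem_filter.mp w.2).2
        simpa [Pi.ringHom, RingHom.pi_apply] using this
      · funext w
        have hw : (w : Fin m → F) ∈ Fintype.piFinset A := (Finset.mem_filter.mp w.2).1
        have hwi : (w : Fin m → F) i ∈ A i := Fintype.mem_piFinset.mp hw i
        simp only [Pi.ringHom, RingHom.pi_apply, Pi.zero_apply, hgdef, eval_prod]
        exact Finset.prod_eq_zero hwi (by simp)
    have := hker hq
    rw [RingHom.mem_ker] at this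
    exact congrFun this z
  -- indicator polynomials and interpolation
  set Nz : (Fin m → F) → MvPolynomial (Fin m) F :=
    fun y => ∏ i, ∏ a ∈ (A i).erase (y i), (X i - C a) with hNzdef
  have hNeval : ∀ x y : Fin m → F,
      eval x (Nz y) = ∏ i, ∏ a ∈ (A i).erase (y i), (x i - a) := by
    intro x y; simp [hNzdef, eval_prod]
  have hNdiag : ∀ z : Fin m → F, eval z (Nz z) ≠ 0 := by
    intro z
    rw [hNeval, Finset.prod_ne_zero_iff]
    intro i _
    rw [Finset.prod_ne_zero_iff]
    intro a haa
    exact sub_ne_zero.mpr (Ne.symm (Finset.ne_of_mem_erase haa))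
  have hNoff : ∀ y z : Fin m → F, y ∈ Fintype.piFinset A → y ≠ z → eval y (Nz z) = 0 := by
    intro y z hy hne
    rw [hNeval]
    obtain ⟨i, hi⟩ := Function.ne_iff.mp hne
    refine Finset.prod_eq_zero (Finset.mem_univ i) ?_
    exact Finset.prod_eq_zero
      (Finset.mem_erase.mpr ⟨hi, (Fintype.mem_piFinset.mp hy) i⟩) (sub_self _)
  -- evaluation as a linear map
  set E : MvPolynomial (Fin m) F →ₗ[F] ({x // x ∈ Zf} → F) :=
    { toFun := fun q z => eval (z : Fin m → F) q
      map_add' := fun q₁ q₂ => by funext z; simp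
      map_smul' := fun r q => by funext z; simp [smul_eq_C_mul] } with hEdef
  set Ssub : Submodule F (MvPolynomial (Fin m) F) :=
    Submodule.span F ((fun a => (monomial a (1:F) : MvPolynomial (Fin m) F)) '' ↑StdFs)
    with hSsubdef
  have hsurj : Function.Surjective (E.comp Ssub.subtype) := by
    intro f
    set Pint : MvPolynomial (Fin m) F :=
      ∑ z ∈ Zf.attach, (f z / eval (z : Fin m → F) (Nz z)) • Nz z with hPintdef
    have hPeval : ∀ z : {x // x ∈ Zf}, eval (z : Fin m → F) Pint = f z := by
      intro z
      rw [hPintdef]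
      have hsum : eval (z : Fin m → F)
            (∑ w ∈ Zf.attach, (f w / eval (w : Fin m → F) (Nz w)) • Nz w)
          = ∑ w ∈ Zf.attach,
            (f w / eval (w : Fin m → F) (Nz w)) * eval (z : Fin m → F) (Nz w) := by
        rw [map_sum]
        refine Finset.sum_congr rfl fun w _ => ?_
        rw [smul_eq_C_mul, map_mul, eval_C]
      rw [hsum, Finset.sum_eq_single_of_mem z (Finset.mem_attach _ _)]
      · rw [div_mul_cancel₀ _ (hNdiag _)]
      · intro w _ hwz
        have hzw : (z : Fin m → F) ≠ (w : Fin m → F) :=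
          fun hEq => hwz (Subtype.ext hEq.symm)
        rw [hNoff _ _ (Finset.mem_filter.mp z.2).1 hzw, mul_zero]
    obtain ⟨s, hs, q, hq, hsq⟩ := Submodule.mem_sup.mp (hmem Pint)
    refine ⟨⟨s, hs⟩, ?_⟩
    funext z
    have hq0 : eval (z : Fin m → F) q = 0 := hvanish q (by simpa using hq) z
    have hse : eval (z : Fin m → F) s = eval (z : Fin m → F) Pint := by
      have h4 := congrArg (eval (z : Fin m → F)) hsq
      rw [map_add, hq0, add_zero] at h4
      exact h4
    show eval (z : Fin m → F) s = f z
    rw [hse, hPeval]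
  -- rank bound
  set MonF : Finset (MvPolynomial (Fin m) F) :=
    StdFs.image (fun a => monomial a (1:F)) with hMonFdef
  have hSsubEq : Ssub = Submodule.span F (↑MonF : Set (MvPolynomial (Fin m) F)) := by
    rw [hSsubdef, hMonFdef]
    congr 1
    exact (Finset.coe_image).symm
  haveI : FiniteDimensional F Ssub := by rw [hSsubEq]; infer_instance
  have hrank1 : Zf.card ≤ Module.finrank F Ssub := by
    have h1 : Module.finrank F ({x // x ∈ Zf} → F) = Zf.card := by
      rw [Module.finrank_pi, Fintype.card_coe]
    have h2 : Module.finrank F ({x // x ∈ Zf} → F) ≤ Module.finrank F Ssub := by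
      have h3 := LinearMap.finrank_range_le (E.comp Ssub.subtype)
      rwa [LinearMap.range_eq_top.mpr hsurj, finrank_top] at h3
    omega
  have hrank2 : Module.finrank F Ssub ≤ StdFs.card := by
    rw [hSsubEq]
    exact le_trans (finrank_span_finset_le_card MonF) Finset.card_image_le
  have hcount : StdFs.card ≤ ∏ i, c i - ∏ i, (c i - e i) := by
    calc StdFs.card ≤ StdFf.card := Finset.card_image_le
      _ = ∏ i, c i - ∏ i, (c i - e i) := by rw [hStdFf]; exact aux_count c e
  exact le_trans (le_trans hrank1 hrank2) hcount
end

section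
/- The footprint bound for Cartesian products is sharp: for any exponent vector (e_1,…,e_m) with e_i < |A_i|, the product of the corresponding linear factors has exactly (|A_1|−e_1)⋯(|A_m|−e_m) non-roots, hence |A_1|⋯|A_m| − (|A_1|−e_1)⋯(|A_m|−e_m) roots in A_1 × ⋯ × A_m. -/
open scoped Classical

open MvPolynomial

lemma card_filter_lt_aux (n k : ℕ) (h : k ≤ n) :
    (Finset.univ.filter (fun j : Fin n => (j : ℕ) < k)).card = k := by
  have hmap : (Finset.univ.filter (fun j : Fin n => (j : ℕ) < k)).map Fin.valEmbedding
      = Finset.range k := by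
    ext x
    simp only [Finset.mem_map, Finset.mem_filter, Finset.mem_univ, true_and,
      Fin.valEmbedding_apply, Finset.mem_range]
    constructor
    · rintro ⟨j, hj, rfl⟩; exact hj
    · intro hx; exact ⟨⟨x, lt_of_lt_of_le hx h⟩, hx, rfl⟩
  have := congrArg Finset.card hmap
  simpa using this

/-- Sharpness of the footprint bound for Cartesian products: with
`A_i = {b_1^{(i)},…,b_{a_i}^{(i)}}` and `e_i < a_i`, the polynomial
`H = ∏_i ∏_{j=1}^{e_i} (X_i − b_j^{(i)})` has exactly
`a_1⋯a_m − (a_1−e_1)⋯(a_m−e_m)` roots in `A_1 × ⋯ × A_m`. -/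
theorem stmt_8 {F : Type*} [Field F] {m : ℕ} (a : Fin m → ℕ)
    (b : ∀ i, Fin (a i) → F) (hb : ∀ i, Function.Injective (b i))
    (A : Fin m → Finset F) (hA : ∀ i, A i = Finset.image (b i) Finset.univ)
    (e : Fin m → ℕ) (he : ∀ i, e i < a i) :
    ((Fintype.piFinset A).filter (fun x =>
        eval x (∏ i, ∏ j ∈ Finset.univ.filter (fun j : Fin (a i) => (j : ℕ) < e i),
          (X i - C (b i j) : MvPolynomial (Fin m) F)) = 0)).card
      = ∏ i, a i - ∏ i, (a i - e i) := by
  classical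
  set P : MvPolynomial (Fin m) F :=
    ∏ i, ∏ j ∈ Finset.univ.filter (fun j : Fin (a i) => (j : ℕ) < e i),
      (X i - C (b i j)) with hP
  have hroot : ∀ x : Fin m → F,
      eval x P = 0 ↔ ∃ i, ∃ j : Fin (a i), (j : ℕ) < e i ∧ x i = b i j := by
    intro x
    simp only [hP, map_prod, Finset.prod_eq_zero_iff, map_sub, eval_X, eval_C,
      sub_eq_zero, Finset.mem_filter, Finset.mem_univ, true_and]
  set B : Fin m → Finset F :=
    fun i => Finset.image (b i) (Finset.univ.filter fun j : Fin (a i) => e i ≤ (j : ℕ))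
    with hB
  have hBmem : ∀ i (v : F), v ∈ B i ↔
      (v ∈ A i ∧ ∀ j : Fin (a i), (j : ℕ) < e i → v ≠ b i j) := by
    intro i v
    simp only [hB, hA, Finset.mem_image, Finset.mem_filter, Finset.mem_univ, true_and]
    constructor
    · rintro ⟨j, hj, rfl⟩
      refine ⟨⟨j, rfl⟩, ?_⟩
      intro j' hj' hEq
      have := hb i hEq
      omega
    · rintro ⟨⟨j, rfl⟩, hall⟩
      refine ⟨j, ?_, rfl⟩
      by_contra hlt
      exact hall j (by omega) rfl
  have hBcard : ∀ i, (B i).card = a i - e i := by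
    intro i
    rw [hB]
    rw [Finset.card_image_of_injective _ (hb i)]
    have h1 := Finset.card_filter_add_card_filter_not
      (s := (Finset.univ : Finset (Fin (a i)))) (p := fun j : Fin (a i) => (j : ℕ) < e i)
    have h2 := card_filter_lt_aux (a i) (e i) (le_of_lt (he i))
    have h3 : (Finset.univ.filter fun j : Fin (a i) => ¬ (j : ℕ) < e i)
        = (Finset.univ.filter fun j : Fin (a i) => e i ≤ (j : ℕ)) := by
      apply Finset.filter_congr; intro j _; simp [not_lt]
    rw [h3, h2] at h1
    simp only [Finset.card_univ, Fintype.card_fin] at h1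
    omega
  have hAcard : ∀ i, (A i).card = a i := by
    intro i
    rw [hA, Finset.card_image_of_injective _ (hb i)]
    simp
  have hne : (Fintype.piFinset A).filter (fun x => ¬ eval x P = 0) = Fintype.piFinset B := by
    ext x
    simp only [Finset.mem_filter, Fintype.mem_piFinset, hroot, hBmem, not_exists]
    constructor
    · rintro ⟨h1, h2⟩ i
      exact ⟨h1 i, fun j hj hEq => (h2 i j) ⟨hj, hEq⟩⟩
    · intro h
      refine ⟨fun i => (h i).1, fun i j hij => (h i).2 j hij.1 hij.2⟩
  have htot := Finset.card_filter_add_card_filter_not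
    (s := Fintype.piFinset A) (p := fun x => eval x P = 0)
  rw [hne] at htot
  rw [Fintype.card_piFinset, Fintype.card_piFinset] at htot
  simp only [hBcard, hAcard] at htot
  omega
end

section
/- The Hermitian polynomial X_1^{q+1} − X_2^q − X_2 has at most q^3 roots in F_{q^2} × F_{q^2}. -/
open scoped Classical
open Polynomial

/-- The Hermitian polynomial `X_1^{q+1} − X_2^q − X_2` has at most `q^3` roots
in `F_{q^2} × F_{q^2}`. -/
theorem stmt_9 {K : Type*} [Field K] [Fintype K] (q : ℕ)
    (hq : ∃ p n : ℕ, p.Prime ∧ 0 < n ∧ q = p ^ n)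
    (hcard : Fintype.card K = q ^ 2) :
    (Finset.univ.filter (fun z : K × K => z.1 ^ (q + 1) = z.2 ^ q + z.2)).card ≤ q ^ 3 := by
  have hq2 : 2 ≤ q := by
    obtain ⟨p, n, hp, hn, rfl⟩ := hq
    calc 2 = 2 ^ 1 := rfl
    _ ≤ p ^ n := Nat.pow_le_pow_left hp.two_le 1 |>.trans (Nat.pow_le_pow_right hp.pos hn)
  have key : ∀ x : K, (Finset.univ.filter (fun y : K => x ^ (q + 1) = y ^ q + y)).card ≤ q := by
    intro x
    set f : K[X] := X ^ q + X - C (x ^ (q + 1)) with hf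
    have h1 : ¬ ((1:ℕ) = q) := by omega
    have h0 : ¬ (q = 0) := by omega
    have hcoeff : f.coeff q = 1 := by
      rw [hf, Polynomial.coeff_sub, Polynomial.coeff_add, Polynomial.coeff_X_pow,
        Polynomial.coeff_X, Polynomial.coeff_C, if_pos rfl, if_neg h1, if_neg h0]
      ring
    have hf0 : f ≠ 0 := fun h => by simp [h] at hcoeff
    have hdeg : f.natDegree = q := by
      unfold f
      compute_degree
      · simp only [if_neg h1, if_neg h0]
        norm_num
      · omega
    have hsub : (Finset.univ.filter (fun y : K => x ^ (q + 1) = y ^ q + y)) ⊆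
        f.roots.toFinset := by
      intro y hy
      simp only [Finset.mem_filter] at hy
      rw [Multiset.mem_toFinset, Polynomial.mem_roots hf0]
      simp [hf, Polynomial.IsRoot, sub_eq_zero, hy.2.symm]
    calc (Finset.univ.filter (fun y : K => x ^ (q + 1) = y ^ q + y)).card
        ≤ f.roots.toFinset.card := Finset.card_le_card hsub
      _ ≤ Multiset.card f.roots := f.roots.toFinset_card_le
      _ ≤ f.natDegree := f.card_roots'
      _ = q := hdeg
  set s := Finset.univ.filter (fun z : K × K => z.1 ^ (q + 1) = z.2 ^ q + z.2) with hs
  have hcardsum : s.card = ∑ x : K, (s.filter (fun z => z.1 = x)).card :=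
    Finset.card_eq_sum_card_fiberwise (fun z _ => Finset.mem_univ z.1)
  have hfiber : ∀ x : K, (s.filter (fun z => z.1 = x)).card ≤ q := by
    intro x
    refine le_trans ?_ (key x)
    apply Finset.card_le_card_of_injOn (fun z => z.2)
    · intro z hz
      have hz : z ∈ s.filter (fun z => z.1 = x) := hz
      show z.2 ∈ Finset.univ.filter (fun y : K => x ^ (q + 1) = y ^ q + y)
      simp only [hs, Finset.mem_filter, Finset.mem_univ, true_and] at hz ⊢
      rw [← hz.2]
      exact hz.1
    · intro a ha b hb hab
      simp only [hs, Finset.coe_filter, Set.mem_setOf_eq, Finset.mem_filter] at ha hb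
      exact Prod.ext (ha.2.trans hb.2.symm) hab
  calc s.card = ∑ x : K, (s.filter (fun z => z.1 = x)).card := hcardsum
    _ ≤ ∑ _x : K, q := Finset.sum_le_sum (fun x _ => hfiber x)
    _ = q ^ 2 * q := by simp [hcard, mul_comm]
    _ = q ^ 3 := by ring
end

section
/- The Hermitian polynomial X_1^{q+1} − X_2^q − X_2 has exactly q^3 roots in F_{q^2} × F_{q^2}. -/
open scoped Classical

open Polynomial Finset in
lemma aux_card_roots_le {K : Type*} [Field K] [Fintype K]
    (f : K[X]) (hf : f ≠ 0) :
    (Finset.univ.filter fun y => f.eval y = 0).card ≤ f.natDegree := by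
  calc (Finset.univ.filter fun y => f.eval y = 0).card
      ≤ f.roots.toFinset.card := by
        apply Finset.card_le_card
        intro y hy
        simp only [Finset.mem_filter] at hy
        simp [Multiset.mem_toFinset, Polynomial.mem_roots hf, Polynomial.IsRoot, hy.2]
    _ ≤ Multiset.card f.roots := f.roots.toFinset_card_le
    _ ≤ f.natDegree := Polynomial.card_roots' f

/-- The Hermitian polynomial `X_1^{q+1} − X_2^q − X_2` has exactly `q^3` roots
in `F_{q^2} × F_{q^2}`. -/
theorem stmt_10 {K : Type*} [Field K] [Fintype K] (q : ℕ)
    (hq : ∃ p n : ℕ, p.Prime ∧ 0 < n ∧ q = p ^ n)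
    (hcard : Fintype.card K = q ^ 2) :
    (Finset.univ.filter (fun z : K × K => z.1 ^ (q + 1) = z.2 ^ q + z.2)).card = q ^ 3 := by
  classical
  obtain ⟨p, n, hp, hn, rfl⟩ := hq
  set q := p ^ n with hqdef
  have hq1 : 1 < q := Nat.one_lt_pow hn.ne' hp.one_lt
  haveI : Fact p.Prime := ⟨hp⟩
  -- characteristic of K is p
  haveI hchar : CharP K p := by
    have hcp : CharP K (ringChar K) := ringChar.charP K
    obtain ⟨m, hrp, hm⟩ := FiniteField.card K (ringChar K)
    have hdvd : ringChar K ∣ Fintype.card K := by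
      rw [hm]; exact dvd_pow_self _ m.pos.ne'
    rw [hcard, hqdef] at hdvd
    have : ringChar K = p := by
      have h1 := hrp.dvd_of_dvd_pow hdvd
      have h2 := hrp.dvd_of_dvd_pow h1
      exact (Nat.prime_dvd_prime_iff_eq hrp hp).mp h2
    rwa [this] at hcp
  have hfrob : ∀ a b : K, (a + b) ^ q = a ^ q + b ^ q := fun a b =>
    add_pow_char_pow a b p n
  -- the additive map g
  let G : K →+ K :=
    { toFun := fun y => y ^ q + y
      map_zero' := by simp [zero_pow (by omega : q ≠ 0)]
      map_add' := fun a b => by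
        show (a + b) ^ q + (a + b) = (a ^ q + a) + (b ^ q + b)
        rw [hfrob]; ring }
  have hG : ∀ y : K, G y = y ^ q + y := fun _ => rfl
  -- every element satisfies y ^ (q^2) = y
  have hpow : ∀ y : K, y ^ (q ^ 2) = y := fun y => by
    rw [← hcard]; exact FiniteField.pow_card y
  -- image considerations
  set F : Finset K := Finset.univ.filter (fun c : K => c ^ q = c) with hF
  have hmemF : ∀ y : K, G y ∈ F := by
    intro y
    simp only [hF, Finset.mem_filter, Finset.mem_univ, true_and, hG]
    rw [hfrob, ← pow_mul, ← pow_two, hpow, add_comm]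
  -- root-count bounds
  have hFle : F.card ≤ q := by
    have h1 : ((Polynomial.X : Polynomial K) ^ q - Polynomial.X).natDegree = q := by
      rw [Polynomial.natDegree_sub_eq_left_of_natDegree_lt] <;>
        simp [Polynomial.natDegree_X_pow, hq1]
    have hne : ((Polynomial.X : Polynomial K) ^ q - Polynomial.X) ≠ 0 := by
      intro h; rw [h] at h1; simp at h1; omega
    have := aux_card_roots_le ((Polynomial.X : Polynomial K) ^ q - Polynomial.X) hne
    rw [h1] at this
    refine le_trans (le_of_eq ?_) this
    congr 1
    ext c
    simp [hF, sub_eq_zero]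
  set ker : Finset K := Finset.univ.filter (fun y : K => G y = 0) with hker
  have hkerle : ker.card ≤ q := by
    have h1 : ((Polynomial.X : Polynomial K) ^ q + Polynomial.X).natDegree = q := by
      rw [Polynomial.natDegree_add_eq_left_of_natDegree_lt] <;>
        simp [Polynomial.natDegree_X_pow, hq1]
    have hne : ((Polynomial.X : Polynomial K) ^ q + Polynomial.X) ≠ 0 := by
      intro h; rw [h] at h1; simp at h1; omega
    have := aux_card_roots_le ((Polynomial.X : Polynomial K) ^ q + Polynomial.X) hne
    rw [h1] at this
    refine le_trans (le_of_eq ?_) this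
    congr 1
    ext c
    simp [hker, hG]
  -- fibers of G
  have hfiber_le : ∀ c : K,
      (Finset.univ.filter fun y : K => G y = c).card ≤ ker.card := by
    intro c
    rcases Finset.eq_empty_or_nonempty (Finset.univ.filter fun y : K => G y = c) with h | h
    · simp [h]
    · obtain ⟨y0, hy0⟩ := h
      simp only [Finset.mem_filter, Finset.mem_univ, true_and] at hy0
      refine le_of_eq (Finset.card_nbij' (fun y => y - y0) (fun y => y + y0) ?_ ?_ ?_ ?_)
      · intro a ha
        simp only [Finset.mem_coe, Finset.mem_filter, Finset.mem_univ, true_and] at ha ⊢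
        rw [hker]
        simp only [Finset.mem_coe, Finset.mem_filter, Finset.mem_univ, true_and]
        rw [map_sub, ha, hy0, sub_self]
      · intro a ha
        rw [hker] at ha
        simp only [Finset.mem_coe, Finset.mem_filter, Finset.mem_univ, true_and] at ha ⊢
        rw [map_add, ha, hy0, zero_add]
      · intro a _; ring
      · intro a _; ring
  have hfiber_eq_of_mem : ∀ c : K, (∃ y0, G y0 = c) →
      (Finset.univ.filter fun y : K => G y = c).card = ker.card := by
    intro c ⟨y0, hy0⟩
    refine Finset.card_nbij' (fun y => y - y0) (fun y => y + y0) ?_ ?_ ?_ ?_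
    · intro a ha
      simp only [Finset.mem_coe, Finset.mem_filter, Finset.mem_univ, true_and] at ha
      rw [hker]
      simp only [Finset.mem_coe, Finset.mem_filter, Finset.mem_univ, true_and]
      rw [map_sub, ha, hy0, sub_self]
    · intro a ha
      rw [hker] at ha
      simp only [Finset.mem_coe, Finset.mem_filter, Finset.mem_univ, true_and] at ha ⊢
      rw [map_add, ha, hy0, zero_add]
    · intro a _; ring
    · intro a _; ring
  -- partition of K by fibers over F
  have hpart : q ^ 2 = ∑ c ∈ F, (Finset.univ.filter fun y : K => G y = c).card := by
    rw [← hcard, ← Finset.card_univ]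
    exact Finset.card_eq_sum_card_fiberwise (fun y _ => hmemF y)
  have hsumle : ∑ c ∈ F, (Finset.univ.filter fun y : K => G y = c).card ≤ F.card * ker.card := by
    calc ∑ c ∈ F, (Finset.univ.filter fun y : K => G y = c).card
        ≤ ∑ _c ∈ F, ker.card := Finset.sum_le_sum (fun c _ => hfiber_le c)
      _ = F.card * ker.card := by rw [Finset.sum_const, smul_eq_mul]
  have hge : q * q ≤ F.card * ker.card := by
    rw [← pow_two]
    calc q ^ 2 = ∑ c ∈ F, (Finset.univ.filter fun y : K => G y = c).card := hpart
      _ ≤ F.card * ker.card := hsumle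
  have h1 : F.card * ker.card ≤ q * ker.card := Nat.mul_le_mul_right _ hFle
  have h2 : q * ker.card ≤ q * q := Nat.mul_le_mul_left _ hkerle
  have hker_eq : ker.card = q :=
    Nat.eq_of_mul_eq_mul_left (by omega) (le_antisymm h2 (hge.trans h1))
  have hF_eq : F.card = q := by
    rw [hker_eq] at h1 hge
    exact Nat.eq_of_mul_eq_mul_right (by omega) (le_antisymm h1 hge)
  -- every element of F has a full fiber
  have hfiber_full : ∀ c ∈ F, (Finset.univ.filter fun y : K => G y = c).card = q := by
    by_contra h
    push_neg at h
    obtain ⟨c, hcF, hcne⟩ := h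
    have hclt : (Finset.univ.filter fun y : K => G y = c).card < q :=
      lt_of_le_of_ne ((hfiber_le c).trans hker_eq.le) hcne
    have : ∑ c ∈ F, (Finset.univ.filter fun y : K => G y = c).card < ∑ _c ∈ F, q :=
      Finset.sum_lt_sum (fun i _ => (hfiber_le i).trans hker_eq.le) ⟨c, hcF, hclt⟩
    rw [Finset.sum_const, smul_eq_mul, hF_eq, ← pow_two, ← hpart] at this
    omega
  -- the norm values lie in F
  have hnorm : ∀ x : K, x ^ (q + 1) ∈ F := by
    intro x
    simp only [hF, Finset.mem_filter, Finset.mem_univ, true_and]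
    rw [← pow_mul]
    have : (q + 1) * q = q ^ 2 + q := by ring
    rw [this, pow_add, hpow, ← pow_succ']
  -- final count
  have hmain : (Finset.univ.filter (fun z : K × K => z.1 ^ (q + 1) = z.2 ^ q + z.2)).card
      = ∑ x : K, (Finset.univ.filter (fun y : K => G y = x ^ (q + 1))).card := by
    rw [Finset.card_eq_sum_card_fiberwise
      (f := fun z : K × K => z.1) (t := Finset.univ) (fun z _ => Finset.mem_univ _)]
    refine Finset.sum_congr rfl (fun x _ => ?_)
    refine Finset.card_nbij' (fun z => z.2) (fun y => (x, y)) ?_ ?_ ?_ ?_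
    · intro z hz
      simp only [Finset.mem_coe, Finset.mem_filter, Finset.mem_univ, true_and] at hz ⊢
      rw [hG, ← hz.2, hz.1.symm]
    · intro y hy
      simp only [Finset.mem_coe, Finset.mem_filter, Finset.mem_univ, true_and] at hy ⊢
      rw [hG] at hy
      exact ⟨hy.symm, trivial⟩
    · intro z hz
      simp only [Finset.mem_coe, Finset.mem_filter, Finset.mem_univ, true_and] at hz
      rw [← hz.2]
    · intro y _; rfl
  rw [hmain]
  have : ∀ x : K, (Finset.univ.filter (fun y : K => G y = x ^ (q + 1))).card = q :=
    fun x => hfiber_full _ (hnorm x)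
  simp only [this, Finset.sum_const, Finset.card_univ, hcard, smul_eq_mul]
  ring
end

section
/- For nested linear codes C_2 ⊆ C_1 ⊆ F^n and a coordinate set A, the dimension of the space of codewords of C_1 vanishing on A modulo those of C_2 vanishing on A equals (dim C_1 − dim C_2) − (dim (C_2^⊥)_A − dim (C_1^⊥)_A). -/
variable {F : Type*} [Field F] {n : ℕ}

/-- The subspace of vectors vanishing on all coordinates in `A`. -/
def vanishOn (A : Finset (Fin n)) : Submodule F (Fin n → F) where
  carrier := {x | ∀ i ∈ A, x i = 0}
  add_mem' hx hy i hi := by simp [hx i hi, hy i hi]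
  zero_mem' i _ := rfl
  smul_mem' c x hx i hi := by simp [hx i hi]

/-- The dual code of `C` with respect to the standard bilinear form. -/
def dualCode (C : Submodule F (Fin n → F)) : Submodule F (Fin n → F) where
  carrier := {y | ∀ c ∈ C, ∑ i, c i * y i = 0}
  add_mem' := by
    intro x y hx hy c hc
    simp only [Set.mem_setOf_eq, Pi.add_apply, mul_add, Finset.sum_add_distrib] at *
    simp [hx c hc, hy c hc]
  zero_mem' := by intro c _; simp
  smul_mem' := by
    intro a x hx c hc
    have h := hx c hc
    calc ∑ i, c i * (a • x) i = a * ∑ i, c i * x i := by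
          simp [Finset.mul_sum, mul_left_comm]
      _ = 0 := by rw [h, mul_zero]

open Module Submodule

lemma mem_dualCode' {C : Submodule F (Fin n → F)} {y : Fin n → F} :
    y ∈ dualCode C ↔ ∀ c ∈ C, ∑ i, c i * y i = 0 := Iff.rfl

lemma toDual_pi (y c : Fin n → F) :
    (Pi.basisFun F (Fin n)).toDual y c = ∑ i, c i * y i := by
  conv_lhs => rw [← (Pi.basisFun F (Fin n)).sum_repr c]
  rw [map_sum]
  refine Finset.sum_congr rfl fun i _ => ?_
  rw [map_smul, Basis.toDual_apply_left]
  simp [Pi.basisFun_repr, smul_eq_mul]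

lemma dualCode_eq_comap (C : Submodule F (Fin n → F)) :
    dualCode C = (Submodule.dualAnnihilator C).comap
      ((Pi.basisFun F (Fin n)).toDualEquiv : (Fin n → F) →ₗ[F] Module.Dual F (Fin n → F)) := by
  ext y
  simp only [mem_dualCode', Submodule.mem_comap, Submodule.mem_dualAnnihilator,
    LinearEquiv.coe_coe, Basis.toDualEquiv_apply, toDual_pi]

lemma finrank_dualCode_add (C : Submodule F (Fin n → F)) :
    finrank F (dualCode C) + finrank F C = n := by
  rw [dualCode_eq_comap]
  have h1 : finrank F ((Submodule.dualAnnihilator C).comap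
      ((Pi.basisFun F (Fin n)).toDualEquiv : (Fin n → F) →ₗ[F] Module.Dual F (Fin n → F)))
      = finrank F (Submodule.dualAnnihilator C) := by
    rw [Submodule.comap_equiv_eq_map_symm]
    exact LinearEquiv.finrank_map_eq _ _
  rw [h1]
  have h2 : finrank F (Submodule.dualAnnihilator C) = finrank F ((Fin n → F) ⧸ C) :=
    (LinearEquiv.finrank_eq (Subspace.quotEquivAnnihilator C)).symm
  rw [h2, Submodule.finrank_quotient_add_finrank]
  simp

lemma dualCode_dualCode (C : Submodule F (Fin n → F)) :
    dualCode (dualCode C) = C := by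
  have hle : C ≤ dualCode (dualCode C) := by
    intro c hc y hy
    have := hy c hc
    simpa [mul_comm] using this
  have h1 := finrank_dualCode_add C
  have h2 := finrank_dualCode_add (dualCode C)
  exact (Submodule.eq_of_le_of_finrank_le hle (by omega)).symm

lemma dualCode_vanishOn (S : Finset (Fin n)) :
    dualCode (vanishOn S : Submodule F (Fin n → F)) = vanishOn Sᶜ := by
  ext y
  constructor
  · intro h i hi
    rw [Finset.mem_compl] at hi
    have hmem : (Pi.single i 1 : Fin n → F) ∈ vanishOn S := by
      intro j hj
      exact Pi.single_eq_of_ne (fun hji => hi (by rwa [hji] at hj)) 1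
    have := h _ hmem
    simpa [Pi.single_apply, ite_mul, Finset.sum_ite_eq'] using this
  · intro h c hc
    refine Finset.sum_eq_zero fun i _ => ?_
    by_cases hi : i ∈ S
    · rw [hc i hi, zero_mul]
    · rw [h i (Finset.mem_compl.mpr hi), mul_zero]

lemma dualCode_sup (X Y : Submodule F (Fin n → F)) :
    dualCode (X ⊔ Y) = dualCode X ⊓ dualCode Y := by
  ext y
  constructor
  · intro h
    exact ⟨fun c hc => h c (le_sup_left (a := X) (b := Y) hc),
           fun c hc => h c (le_sup_right (a := X) (b := Y) hc)⟩
  · rintro ⟨h1, h2⟩ c hc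
    obtain ⟨x, hx, z, hz, rfl⟩ := Submodule.mem_sup.mp hc
    simp only [Pi.add_apply, add_mul, Finset.sum_add_distrib, h1 x hx, h2 z hz, add_zero]

lemma forney (C : Submodule F (Fin n → F)) (A : Finset (Fin n)) :
    finrank F (C ⊓ vanishOn A : Submodule F (Fin n → F)) +
      finrank F (dualCode C ⊔ vanishOn Aᶜ : Submodule F (Fin n → F)) = n := by
  have h : (C ⊓ vanishOn A : Submodule F (Fin n → F)) =
      dualCode (dualCode C ⊔ vanishOn Aᶜ) := by
    rw [dualCode_sup, dualCode_dualCode, dualCode_vanishOn, compl_compl]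
  rw [h]
  exact finrank_dualCode_add _


/-- For nested codes `C₂ ⊆ C₁ ⊆ F^n`:
`dim (C₁)_{Ā} − dim (C₂)_{Ā} = (dim C₁ − dim C₂) − (dim (C₂^⊥)_A − dim (C₁^⊥)_A)`. -/
theorem stmt_13 (C₁ C₂ : Submodule F (Fin n → F)) (hC : C₂ ≤ C₁) (A : Finset (Fin n)) :
    (Module.finrank F (C₁ ⊓ vanishOn A : Submodule F (Fin n → F)) : ℤ) -
        Module.finrank F (C₂ ⊓ vanishOn A : Submodule F (Fin n → F)) =
      ((Module.finrank F C₁ : ℤ) - Module.finrank F C₂) -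
        ((Module.finrank F (dualCode C₂ ⊓ vanishOn Aᶜ : Submodule F (Fin n → F)) : ℤ) -
          Module.finrank F (dualCode C₁ ⊓ vanishOn Aᶜ : Submodule F (Fin n → F))) := by

  have k1 := forney C₁ A
  have k2 := forney C₂ A
  have s1 := Submodule.finrank_sup_add_finrank_inf_eq (dualCode C₁) (vanishOn Aᶜ : Submodule F (Fin n → F))
  have s2 := Submodule.finrank_sup_add_finrank_inf_eq (dualCode C₂) (vanishOn Aᶜ : Submodule F (Fin n → F))
  have a1 := finrank_dualCode_add C₁
  have a2 := finrank_dualCode_add C₂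
  omega
end

section
/- If the evaluation vectors of footprint monomials at the points of a finite Cartesian product are considered, then evaluation gives a linear isomorphism from the span of box monomials to F^n, i.e. the evaluation vectors of the box monomials form a basis of F^n. -/
open MvPolynomial

/-- The evaluation vectors of the box monomials (exponents `< |A_i|` in each variable)
at the points of the Cartesian product `A_1 × ⋯ × A_m` form a basis of `F^n`,
`n = |A_1|⋯|A_m|`. -/
theorem stmt_15 {F : Type*} [Field F] {m : ℕ} (A : Fin m → Finset F)
    (v : {d : Fin m →₀ ℕ // ∀ i, d i < (A i).card} →
        ({x : Fin m → F // x ∈ Fintype.piFinset A} → F))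
    (hv : ∀ d x, v d x = eval (x : Fin m → F) (monomial (d : Fin m →₀ ℕ) (1 : F))) :
    LinearIndependent F v ∧ Submodule.span F (Set.range v) = ⊤ := by
  classical
  have hv' : ∀ (d : {d : Fin m →₀ ℕ // ∀ i, d i < (A i).card})
      (x : {x : Fin m → F // x ∈ Fintype.piFinset A}),
      v d x = ∏ i, (x : Fin m → F) i ^ (d : Fin m →₀ ℕ) i := by
    intro d x
    rw [hv, eval_monomial, one_mul, Finsupp.prod_pow]
  let e1 : {d : Fin m →₀ ℕ // ∀ i, d i < (A i).card} ≃ (∀ i, Fin (A i).card) :=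
  { toFun := fun d i => ⟨(d : Fin m →₀ ℕ) i, d.2 i⟩
    invFun := fun f => ⟨Finsupp.equivFunOnFinite.symm (fun i => (f i : ℕ)), fun i => by
      simp [Finsupp.equivFunOnFinite]⟩
    left_inv := fun d => by
      apply Subtype.ext
      apply Finsupp.ext
      intro i
      simp [Finsupp.equivFunOnFinite]
    right_inv := fun f => by
      funext i
      apply Fin.ext
      simp [Finsupp.equivFunOnFinite] }
  let e2 : (∀ i, (A i : Type _)) ≃ {x : Fin m → F // x ∈ Fintype.piFinset A} :=
  { toFun := fun f => ⟨fun i => (f i : F), Fintype.mem_piFinset.mpr fun i => (f i).2⟩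
    invFun := fun x => fun i => ⟨(x : Fin m → F) i, Fintype.mem_piFinset.mp x.2 i⟩
    left_inv := fun f => by funext i; rfl
    right_inv := fun x => by apply Subtype.ext; funext i; rfl }
  let e3 : {d : Fin m →₀ ℕ // ∀ i, d i < (A i).card} ≃ (∀ i, (A i : Type _)) :=
    e1.trans (Equiv.piCongrRight fun i => ((A i).equivFin).symm)
  let E : {d : Fin m →₀ ℕ // ∀ i, d i < (A i).card} ≃
      {x : Fin m → F // x ∈ Fintype.piFinset A} := e3.trans e2
  let V : ∀ i, Matrix (A i : Type _) (A i : Type _) F :=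
    fun i a b => (b : F) ^ (((A i).equivFin a : ℕ))
  have hV : ∀ i, IsUnit (V i) := by
    intro i
    have hinj : Function.Injective
        (fun l : Fin (A i).card => ((((A i).equivFin).symm l : F))) := by
      intro a b hab
      exact ((A i).equivFin).symm.injective (Subtype.ext hab)
    have hdet : (Matrix.vandermonde
        (fun l : Fin (A i).card => ((((A i).equivFin).symm l : F)))).det ≠ 0 :=
      Matrix.det_vandermonde_ne_zero_iff.mpr hinj
    have hVeq : V i = Matrix.submatrix
        (Matrix.vandermonde (fun l : Fin (A i).card => ((((A i).equivFin).symm l : F)))).transpose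
        ((A i).equivFin) ((A i).equivFin) := by
      funext a b
      simp [V, Matrix.vandermonde, Matrix.submatrix, Matrix.transpose]
    rw [Matrix.isUnit_iff_isUnit_det, hVeq, Matrix.det_submatrix_equiv_self,
      Matrix.det_transpose]
    exact isUnit_iff_ne_zero.mpr hdet
  let c : {x : Fin m → F // x ∈ Fintype.piFinset A} → ∀ i, (A i : Type _) :=
    fun p => e2.symm p
  let M : Matrix {x : Fin m → F // x ∈ Fintype.piFinset A}
      {x : Fin m → F // x ∈ Fintype.piFinset A} F := fun p q => ∏ i, V i (c p i) (c q i)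
  let W : ∀ i, Matrix (A i : Type _) (A i : Type _) F := fun i => ((hV i).unit⁻¹ : _)
  have hVW : ∀ i, V i * W i = 1 := fun i => (hV i).mul_val_inv
  let N : Matrix {x : Fin m → F // x ∈ Fintype.piFinset A}
      {x : Fin m → F // x ∈ Fintype.piFinset A} F := fun q r => ∏ i, W i (c q i) (c r i)
  have hMN : M * N = 1 := by
    funext p r
    show ∑ q, M p q * N q r = (1 : Matrix _ _ F) p r
    have step1 : ∑ q, M p q * N q r
        = ∑ f : (∀ i, (A i : Type _)), ∏ i, (V i (c p i) (f i) * W i (f i) (c r i)) := by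
      rw [← e2.sum_comp (fun q => M p q * N q r)]
      apply Finset.sum_congr rfl
      intro f _
      show (∏ i, V i (c p i) (c (e2 f) i)) * (∏ i, W i (c (e2 f) i) (c r i)) = _
      rw [← Finset.prod_mul_distrib]
      apply Finset.prod_congr rfl
      intro i _
      have h : c (e2 f) = f := e2.symm_apply_apply f
      rw [h]
    rw [step1]
    have step2 : ∑ f : (∀ i, (A i : Type _)), ∏ i, (V i (c p i) (f i) * W i (f i) (c r i))
        = ∏ i, ∑ b : (A i : Type _), V i (c p i) b * W i b (c r i) := by
      rw [Finset.prod_univ_sum]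
      rw [Fintype.piFinset_univ]
    rw [step2]
    have step3 : ∀ i, (∑ b : (A i : Type _), V i (c p i) b * W i b (c r i))
        = (1 : Matrix (A i : Type _) (A i : Type _) F) (c p i) (c r i) := by
      intro i
      rw [← hVW i, Matrix.mul_apply]
    simp only [step3]
    have key : (∏ i, (1 : Matrix (A i : Type _) (A i : Type _) F) (c p i) (c r i))
        = if p = r then 1 else 0 := by
      simp only [Matrix.one_apply]
      rcases eq_or_ne p r with h | h
      · subst h; simp
      · have hex : ∃ i, c p i ≠ c r i := by
          by_contra hc
          push_neg at hc
          exact h (e2.symm.injective (funext hc))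
        obtain ⟨i, hi⟩ := hex
        rw [if_neg h]
        exact Finset.prod_eq_zero (Finset.mem_univ i) (if_neg hi)
    rw [key, Matrix.one_apply]
  have hu : IsUnit M :=
    (Matrix.isUnit_iff_isUnit_det M).mpr (Matrix.isUnit_det_of_right_inverse hMN)
  have liM : LinearIndependent F (fun p => M p) :=
    Matrix.linearIndependent_rows_iff_isUnit.mpr hu
  have hME : ∀ d, M (E d) = v d := by
    intro d
    funext q
    rw [hv' d q]
    show (∏ i, V i (c (E d) i) (c q i)) = _
    apply Finset.prod_congr rfl
    intro i _
    have hc : c (E d) = e3 d := e2.symm_apply_apply (e3 d)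
    rw [hc]
    show ((c q i : F)) ^ (((A i).equivFin (e3 d i) : ℕ)) = _
    have h3 : e3 d i = ((A i).equivFin).symm ⟨(d : Fin m →₀ ℕ) i, d.2 i⟩ := rfl
    rw [h3, Equiv.apply_symm_apply]
    rfl
  have hveq : (fun p => M p) ∘ E = v := funext hME
  have li : LinearIndependent F v := by
    rw [← hveq]
    exact (linearIndependent_equiv E).mpr liM
  refine ⟨li, ?_⟩
  haveI : Fintype {d : Fin m →₀ ℕ // ∀ i, d i < (A i).card} :=
    Fintype.ofEquiv _ E.symm
  apply li.span_eq_top_of_card_eq_finrank'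
  rw [Module.finrank_fintype_fun_eq_card]
  exact Fintype.card_congr E
end
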